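/- Fix a β-sequence [·]_β and u ∈ 𝒫₀,₁, and let (P_n)_{n≥0} be the polynomial sequence determined by Σ_{n≥0} (1/[n]_β!) P_n(x) z^n = Σ_{k≥0} (1/[k]_β!) x^k u(z)^k in ℂ[x][[z]]. Then for every polynomial f ∈ ℂ[x], the formal power series f(u(z)) obtained by substituting u into f satisfies: the coefficient of z^n in f(u(z)) equals (1/[n]_β!)·(P_n(D_β) f)(0) for every n ≥ 0, where P_n(D_β) is the operator obtained by evaluating the polynomial P_n at the operator D_β and (·)(0) denotes evaluation of the resulting polynomial at 0. -/

import Mathlib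

/-- The β-factorial `[n]_β! = ∏_{i=1}^n [i]_β`. -/
noncomputable def betaFact (β : ℕ → ℝ) (n : ℕ) : ℝ := ∏ i ∈ Finset.range n, β (i + 1)

/-!
Since `D_β` lowers degrees and kills constants, `(D_β^k f)(0) = [k]_β! · f_k`, so the functional
`f ↦ (D_β^k f)(0) / [k]_β!` extracts the `k`-th coefficient of `f`. The generating identity makes
`P_n / [n]_β!` the polynomial `∑_k ([z^n] u^k / [k]_β!) x^k`, hence
`(P_n(D_β) f)(0) / [n]_β! = ∑_k f_k [z^n] u^k`, which is `[z^n] f(u)` because `u^k = O(z^k)`.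
-/

open Polynomial

theorem betaFact_pos {β : ℕ → ℝ} (hβpos : ∀ n, 1 ≤ n → 0 < β n) (n : ℕ) : 0 < betaFact β n :=
  Finset.prod_pos fun i _ => hβpos (i + 1) (by omega)

section LoweringOperator

variable {R : Type*} [CommSemiring R] {c : ℕ → R} {D : Module.End R R[X]}

theorem eval_zero_pow_apply_X_pow (hc0 : c 0 = 0) (hD : ∀ n, D (X ^ n) = c n • X ^ (n - 1))
    (k m : ℕ) :
    eval 0 ((D ^ k) (X ^ m)) = if k = m then ∏ i ∈ Finset.range m, c (i + 1) else 0 := by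
  induction k generalizing m with
  | zero => cases m <;> simp
  | succ k ih =>
    rw [pow_succ, Module.End.mul_apply, hD, map_smul, eval_smul, smul_eq_mul, ih]
    cases m with
    | zero => simp [hc0]
    | succ m =>
      by_cases hkm : k = m
      · simp [hkm, Finset.prod_range_succ, mul_comm]
      · simp [hkm]

theorem eval_zero_pow_apply (hc0 : c 0 = 0) (hD : ∀ n, D (X ^ n) = c n • X ^ (n - 1))
    (k : ℕ) (p : R[X]) :
    eval 0 ((D ^ k) p) = (∏ i ∈ Finset.range k, c (i + 1)) * p.coeff k := by
  induction p using Polynomial.induction_on' with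
  | add p q hp hq => simp [hp, hq, mul_add]
  | monomial m a =>
    rw [← smul_X_eq_monomial, map_smul, eval_smul, smul_eq_mul,
      eval_zero_pow_apply_X_pow hc0 hD, coeff_smul, coeff_X_pow, smul_eq_mul]
    by_cases hkm : k = m
    · simp [hkm, mul_comm]
    · simp [hkm]

end LoweringOperator

theorem PowerSeries.coeff_aeval_eq_sum_range {R : Type*} [CommSemiring R] {u : PowerSeries R}
    (hu0 : constantCoeff u = 0) (f : R[X]) (n : ℕ) :
    coeff n (Polynomial.aeval u f) = ∑ j ∈ Finset.range (n + 1), f.coeff j * coeff n (u ^ j) := by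
  induction f using Polynomial.induction_on' with
  | add p q hp hq => simp [hp, hq, add_mul, Finset.sum_add_distrib]
  | monomial m a =>
    simp only [Polynomial.aeval_monomial, Polynomial.coeff_monomial, ite_mul, zero_mul,
      Finset.sum_ite_eq, Finset.mem_range, algebraMap_eq, coeff_C_mul]
    split_ifs with hm
    · rfl
    · exact mul_eq_zero_of_right _ <| coeff_of_lt_order n <|
        (Nat.cast_lt.mpr (by omega)).trans_le (le_order_pow_of_constantCoeff_eq_zero m hu0)

theorem stmt_14_general (β : ℕ → ℝ) (hβ0 : β 0 = 0) (hβpos : ∀ n, 1 ≤ n → 0 < β n)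
    (u : PowerSeries ℂ)
    (hu0 : PowerSeries.constantCoeff u = 0)
    (P : ℕ → Polynomial ℂ)
    (hgen : ∀ n : ℕ, ((betaFact β n : ℂ))⁻¹ • P n =
      ∑ k ∈ Finset.range (n + 1),
        ((betaFact β k : ℂ))⁻¹ •
          (Polynomial.C (PowerSeries.coeff n (u ^ k)) * Polynomial.X ^ k))
    (D : Module.End ℂ (Polynomial ℂ))
    (hD : ∀ n : ℕ, D (Polynomial.X ^ n) = ((β n : ℂ)) • Polynomial.X ^ (n - 1)) :
    ∀ (f : Polynomial ℂ) (n : ℕ),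
      PowerSeries.coeff n (Polynomial.aeval u f) =
        ((betaFact β n : ℂ))⁻¹ * Polynomial.eval 0 ((Polynomial.aeval D (P n)) f) := by
  intro f n
  have hfact_ne : ∀ k, ((betaFact β k : ℝ) : ℂ) ≠ 0 := fun k =>
    Complex.ofReal_ne_zero.mpr (betaFact_pos hβpos k).ne'
  have hP : P n = (betaFact β n : ℂ) • ∑ k ∈ Finset.range (n + 1),
      ((betaFact β k : ℂ))⁻¹ • (C (PowerSeries.coeff n (u ^ k)) * X ^ k) := by
    rw [← hgen, smul_inv_smul₀ (hfact_ne n)]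
  rw [PowerSeries.coeff_aeval_eq_sum_range hu0, hP]
  simp only [map_smul, map_sum, map_mul, aeval_C, aeval_X, map_pow, LinearMap.smul_apply,
    LinearMap.sum_apply, eval_smul, eval_finsetSum, smul_eq_mul,
    inv_mul_cancel_left₀ (hfact_ne n)]
  refine Finset.sum_congr rfl fun k _ => ?_
  have hfact : ((betaFact β k : ℝ) : ℂ) = ∏ i ∈ Finset.range k, (β (i + 1) : ℂ) := by
    simp [betaFact]
  rw [Module.End.mul_apply, Module.algebraMap_end_apply, eval_smul,
    eval_zero_pow_apply (by simp [hβ0]) hD, ← hfact, smul_eq_mul,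
    mul_left_comm, inv_mul_cancel_left₀ (hfact_ne k), mul_comm]

/-- for the polynomial sequence with β-generating function `exp_β(u(z)x)`,
`u ∈ 𝒫₀,₁`, and any polynomial `f`, the coefficient of `zⁿ` in `f(u(z))` equals
`(1/[n]_β!) · (P_n(D_β) f)(0)`. -/
theorem stmt_14 (β : ℕ → ℝ) (hβ0 : β 0 = 0) (hβ1 : β 1 = 1) (hβpos : ∀ n, 1 ≤ n → 0 < β n)
    (u : PowerSeries ℂ)
    (hu0 : PowerSeries.constantCoeff u = 0) (hu1 : PowerSeries.coeff 1 u = 1)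
    (P : ℕ → Polynomial ℂ)
    (hgen : ∀ n : ℕ, ((betaFact β n : ℂ))⁻¹ • P n =
      ∑ k ∈ Finset.range (n + 1),
        ((betaFact β k : ℂ))⁻¹ •
          (Polynomial.C (PowerSeries.coeff n (u ^ k)) * Polynomial.X ^ k))
    (D : Module.End ℂ (Polynomial ℂ))
    (hD : ∀ n : ℕ, D (Polynomial.X ^ n) = ((β n : ℂ)) • Polynomial.X ^ (n - 1)) :
    ∀ (f : Polynomial ℂ) (n : ℕ),
      PowerSeries.coeff n (Polynomial.aeval u f) =
        ((betaFact β n : ℂ))⁻¹ * Polynomial.eval 0 ((Polynomial.aeval D (P n)) f) :=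
  stmt_14_general β hβ0 hβpos u hu0 P hgen D hD
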